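/- Let Γ be a finite normal-form game, σ a Nash equilibrium of Γ, and {σ^λ}_{λ∈ℕ} a convergent sequence of interior payoff monotone strategy profiles for Γ with limit σ. Then there exist a strictly increasing function κ : ℕ → ℕ and a sequence {f^λ}_{λ∈ℕ} of profiles of control cost functions such that: (1) the sequence {f^λ} vanishes, i.e., for each player i and each x ∈ (0,1], f^λ_i(x) → 0 as λ → ∞; and (2) for each λ, the profile σ^{κ(λ)} satisfies the first-order equilibrium conditions of the control cost game associated with Γ and f^λ: for each player i and each pair of actions a_l, a_k ∈ A_i, U_i(σ^{κ(λ)}_{-i},a_l) − U_i(σ^{κ(λ)}_{-i},a_k) = (f^λ_i)'(σ^{κ(λ)}_i(a_l)) − (f^λ_i)'(σ^{κ(λ)}_i(a_k)). -/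

import Mathlib

open Filter Topology

section GameDefs

variable {N : Type} [Fintype N] [DecidableEq N] {A : N → Type}
  [∀ i, Fintype (A i)] [∀ i, DecidableEq (A i)]

/-- A mixed-strategy profile: each `σ i` is a probability distribution on `A i`. -/
def IsStrategy (σ : ∀ i, A i → ℝ) : Prop :=
  (∀ i a, 0 ≤ σ i a) ∧ ∀ i, ∑ a, σ i a = 1

/-- An interior profile places positive probability on every action. -/
def Interior (σ : ∀ i, A i → ℝ) : Prop :=
  ∀ i a, 0 < σ i a

/-- Expected utility of player `i` at profile `σ`. -/
noncomputable def expUtil (u : ∀ i : N, (∀ j, A j) → ℝ) (σ : ∀ i, A i → ℝ) (i : N) : ℝ :=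
  ∑ a : ∀ j, A j, u i a * ∏ j, σ j (a j)

/-- Expected utility of player `i` from playing action `ai` against `σ₋ᵢ`. -/
noncomputable def devUtil (u : ∀ i : N, (∀ j, A j) → ℝ) (σ : ∀ i, A i → ℝ)
    (i : N) (ai : A i) : ℝ :=
  expUtil u (Function.update σ i (fun b => if b = ai then (1 : ℝ) else 0)) i

/-- Nash equilibrium. -/
def IsNash (u : ∀ i : N, (∀ j, A j) → ℝ) (σ : ∀ i, A i → ℝ) : Prop :=
  IsStrategy σ ∧ ∀ (i : N) (μ : A i → ℝ), (∀ a, 0 ≤ μ a) → (∑ a, μ a = 1) →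
    expUtil u (Function.update σ i μ) i ≤ expUtil u σ i

/-- Weak payoff monotonicity: differences in behavior reveal differences in payoffs. -/
def WeaklyPayoffMonotone (u : ∀ i : N, (∀ j, A j) → ℝ) (σ : ∀ i, A i → ℝ) : Prop :=
  IsStrategy σ ∧ ∀ (i : N) (ai bi : A i), σ i bi < σ i ai →
    devUtil u σ i bi < devUtil u σ i ai

/-- Payoff monotonicity. -/
def PayoffMonotone (u : ∀ i : N, (∀ j, A j) → ℝ) (σ : ∀ i, A i → ℝ) : Prop :=
  IsStrategy σ ∧ ∀ (i : N) (ai bi : A i),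
    σ i bi ≤ σ i ai ↔ devUtil u σ i bi ≤ devUtil u σ i ai

/-- Pointwise convergence of a sequence of profiles. -/
def ConvergesTo (s : ℕ → ∀ i, A i → ℝ) (σ : ∀ i, A i → ℝ) : Prop :=
  ∀ (i : N) (ai : A i), Tendsto (fun n => s n i ai) atTop (𝓝 (σ i ai))

/-- Empirical equilibrium: a Nash equilibrium that is the limit of weakly payoff
monotone profiles. -/
def IsEmpirical (u : ∀ i : N, (∀ j, A j) → ℝ) (σ : ∀ i, A i → ℝ) : Prop :=
  IsNash u σ ∧ ∃ s : ℕ → ∀ i, A i → ℝ,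
    (∀ n, WeaklyPayoffMonotone u (s n)) ∧ ConvergesTo s σ

/-- Proper equilibrium (Myerson). -/
def IsProper (u : ∀ i : N, (∀ j, A j) → ℝ) (σ : ∀ i, A i → ℝ) : Prop :=
  IsStrategy σ ∧ ∃ s : ℕ → ∀ i, A i → ℝ,
    (∀ n, IsStrategy (s n) ∧ Interior (s n) ∧
      ∀ (i : N) (ai bi : A i),
        devUtil u (s n) i bi < devUtil u (s n) i ai →
          s n i bi ≤ (1 / (n + 1) : ℝ) * s n i ai) ∧
    ConvergesTo s σ

/-- Perfect equilibrium (Selten, in Myerson's formulation). -/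
def IsPerfect (u : ∀ i : N, (∀ j, A j) → ℝ) (σ : ∀ i, A i → ℝ) : Prop :=
  IsStrategy σ ∧ ∃ s : ℕ → ∀ i, A i → ℝ,
    (∀ n, IsStrategy (s n) ∧ Interior (s n) ∧
      ∀ (i : N) (ai : A i), (1 / (n + 1) : ℝ) < s n i ai →
        ∀ bi : A i, devUtil u (s n) i bi ≤ devUtil u (s n) i ai) ∧
    ConvergesTo s σ

/-- `bi` weakly dominates `ai` for player `i`. -/
def WeaklyDominates (u : ∀ i : N, (∀ j, A j) → ℝ) (i : N) (bi ai : A i) : Prop :=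
  (∀ a : ∀ j, A j, u i (Function.update a i ai) ≤ u i (Function.update a i bi)) ∧
  ∃ a : ∀ j, A j, u i (Function.update a i ai) < u i (Function.update a i bi)

/-- Undominated Nash equilibrium. -/
def IsUndominatedNash (u : ∀ i : N, (∀ j, A j) → ℝ) (σ : ∀ i, A i → ℝ) : Prop :=
  IsNash u σ ∧ ∀ (i : N) (ai : A i), 0 < σ i ai →
    ¬ ∃ bi : A i, WeaklyDominates u i bi ai

end GameDefs

/-- A regular quantal response function on a finite set of actions `B`:
interiority, continuity, responsiveness, and monotonicity. -/
def IsRegularQRF {B : Type} [Fintype B] [DecidableEq B]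
    (p : (B → ℝ) → (B → ℝ)) : Prop :=
  (∀ x, (∀ a, 0 < p x a) ∧ ∑ a, p x a = 1) ∧
  Continuous p ∧
  (∀ (x : B → ℝ) (η : ℝ) (a : B), 0 < η →
    p x a < p (Function.update x a (x a + η)) a) ∧
  ∀ (x : B → ℝ) (a b : B), x b < x a → p x b < p x a

section QREDefs

variable {N : Type} [Fintype N] [DecidableEq N] {A : N → Type}
  [∀ i, Fintype (A i)] [∀ i, DecidableEq (A i)]

/-- Quantal response equilibrium with respect to a profile of QRFs `p`. -/
def IsQRE (u : ∀ i : N, (∀ j, A j) → ℝ) (p : ∀ i, (A i → ℝ) → (A i → ℝ))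
    (σ : ∀ i, A i → ℝ) : Prop :=
  ∀ i : N, σ i = p i (fun ai => devUtil u σ i ai)

/-- A sequence of profiles of QRFs is utility maximizing in the limit. -/
def UtilityMaximizingInLimit (u : ∀ i : N, (∀ j, A j) → ℝ)
    (p : ℕ → ∀ i, (A i → ℝ) → (A i → ℝ)) : Prop :=
  ∀ (s : ℕ → ∀ i, A i → ℝ) (σ : ∀ i, A i → ℝ),
    (∀ n, IsQRE u (p n) (s n)) → ConvergesTo s σ → IsNash u σ

/-- `σ` is approachable by regular QRE that are utility maximizing in the limit. -/
def ApproachableByRegularQRE (u : ∀ i : N, (∀ j, A j) → ℝ) (σ : ∀ i, A i → ℝ) : Prop :=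
  ∃ p : ℕ → ∀ i, (A i → ℝ) → (A i → ℝ),
    (∀ n i, IsRegularQRF (p n i)) ∧ UtilityMaximizingInLimit u p ∧
    ∃ s : ℕ → ∀ i, A i → ℝ, (∀ n, IsQRE u (p n) (s n)) ∧ ConvergesTo s σ

end QREDefs

/-- A control cost function (van Damme), bundled with its derivative on `(0,1]`. -/
structure ControlCost where
  f : ℝ → ℝ
  f' : ℝ → ℝ
  hasDeriv : ∀ x ∈ Set.Ioc (0:ℝ) 1, HasDerivWithinAt f (f' x) (Set.Ioc (0:ℝ) 1) x
  contDeriv : ContinuousOn f' (Set.Ioc (0:ℝ) 1)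
  anti : StrictAntiOn f (Set.Ioc (0:ℝ) 1)
  convex : StrictConvexOn ℝ (Set.Ioc (0:ℝ) 1) f
  atOne : f 1 = 0
  blowup : Tendsto f (nhdsWithin 0 (Set.Ioi (0:ℝ))) atTop

/-!
By payoff monotonicity, at `s n` the payoff `devUtil` of player `i` is a strictly increasing
function of the probability of the action played. These finitely many points are interpolated by a
continuous strictly increasing `h`: a minimum of lines of small slope `δ`, each lifted by a ramp of
width `δ` just to the right of its point. The marginal cost `F t = h 1 + e - h t + e · barrier t`,
where the barrier vanishes at every probability in play and grows like `1 / t` at `0`, is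
positive, strictly decreasing and not integrable at `0`; so `x ↦ ∫ₓ¹ F` is a control cost, and its
first-order conditions hold at `s n` by construction, so `κ = id` works.

For the vanishing take `e = 1 / (n + 1)`. As `F` decreases, the cost at `x` is at most `F x`, and
`h 1 - h x` is at most the best payoff minus the worst payoff on the support of `σ`, up to `O(e)`:
actions outside the support eventually have probability below `x - e`, so their lines are fully
lifted at `x`. At the Nash equilibrium `σ` every action of the support earns the best payoff, so
this spread tends to `0`, and so does `F x ≤ spread + 3 e + e / x`.
-/

open Set

noncomputable def ramp (δ s : ℝ) : ℝ := min (max s 0) δ / δ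

section Ramp

variable {δ s : ℝ}

lemma ramp_nonneg (hδ : 0 < δ) : 0 ≤ ramp δ s :=
  div_nonneg (le_min (le_max_right _ _) hδ.le) hδ.le

lemma ramp_le_one (hδ : 0 < δ) : ramp δ s ≤ 1 :=
  (div_le_one hδ).2 (min_le_right _ _)

lemma ramp_of_nonpos (hδ : 0 < δ) (hs : s ≤ 0) : ramp δ s = 0 := by
  rw [ramp, max_eq_right hs, min_eq_left hδ.le, zero_div]

lemma ramp_of_le (hδ : 0 < δ) (hs : δ ≤ s) : ramp δ s = 1 := by
  rw [ramp, max_eq_left (hδ.le.trans hs), min_eq_right hs, div_self hδ.ne']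

lemma ramp_mono (hδ : 0 < δ) : Monotone (ramp δ) := fun _ _ h =>
  div_le_div_of_nonneg_right (min_le_min_right _ (max_le_max_right _ h)) hδ.le

@[fun_prop]
lemma continuous_ramp : Continuous (ramp δ) := by
  unfold ramp; fun_prop

end Ramp

lemma eventually_forall_gap {B : Type*} [Finite B] (p v : B → ℝ)
    (hv : ∀ a b, p b < p a → v b < v a) :
    ∀ᶠ δ in 𝓝 0, ∀ a b, p b < p a → δ ≤ p a - p b ∧ δ * (p a - p b) ≤ v a - v b := by
  refine eventually_all.2 fun a => eventually_all.2 fun b => ?_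
  by_cases hba : p b < p a
  · have hslope : Tendsto (fun δ : ℝ => δ * (p a - p b)) (𝓝 0) (𝓝 0) := by
      simpa using (continuous_mul_const (p a - p b)).tendsto 0
    filter_upwards [eventually_le_nhds (sub_pos.2 hba),
      hslope.eventually_le_const (sub_pos.2 (hv a b hba))] with δ h₁ h₂ _ using ⟨h₁, h₂⟩
  · exact Eventually.of_forall fun _ h => absurd h hba

section Interpolation

variable {B : Type*} [Fintype B] [Nonempty B] (p v : B → ℝ) {δ : ℝ}

noncomputable def interpPiece (δ : ℝ) (a : B) (t : ℝ) : ℝ :=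
  v a + δ * (t - p a) + (Finset.univ.sup' Finset.univ_nonempty v - v a) * ramp δ (t - p a)

noncomputable def monotoneInterp (δ t : ℝ) : ℝ :=
  Finset.univ.inf' Finset.univ_nonempty fun a => interpPiece p v δ a t

variable {p v}

lemma strictMono_interpPiece (hδ : 0 < δ) (a : B) : StrictMono (interpPiece p v δ a) := by
  intro x y hxy
  have hlift := mul_le_mul_of_nonneg_left (ramp_mono hδ (sub_le_sub_right hxy.le (p a)))
    (sub_nonneg.2 (Finset.le_sup' v (Finset.mem_univ a)))
  have hslope := mul_lt_mul_of_pos_left (sub_lt_sub_right hxy (p a)) hδ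
  simp only [interpPiece]
  linarith

lemma continuous_monotoneInterp : Continuous (monotoneInterp p v δ) :=
  Continuous.finset_inf'_apply _ fun a _ => by unfold interpPiece; fun_prop

lemma strictMono_monotoneInterp (hδ : 0 < δ) : StrictMono (monotoneInterp p v δ) := by
  intro x y hxy
  obtain ⟨a, -, ha⟩ := Finset.exists_mem_eq_inf' Finset.univ_nonempty fun a => interpPiece p v δ a y
  calc monotoneInterp p v δ x ≤ interpPiece p v δ a x := Finset.inf'_le _ (Finset.mem_univ a)
    _ < interpPiece p v δ a y := strictMono_interpPiece hδ a hxy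
    _ = monotoneInterp p v δ y := ha.symm

lemma monotoneInterp_apply (hδ : 0 < δ) (hv : ∀ a b, p b ≤ p a → v b ≤ v a)
    (hgap : ∀ a b, p b < p a → δ ≤ p a - p b ∧ δ * (p a - p b) ≤ v a - v b) (a : B) :
    monotoneInterp p v δ (p a) = v a := by
  refine le_antisymm ((Finset.inf'_le _ (Finset.mem_univ a)).trans_eq ?_)
    (Finset.le_inf' _ _ fun b _ => ?_)
  · simp [interpPiece, ramp_of_nonpos hδ le_rfl]
  -- Pieces of actions with smaller `p` are fully lifted at `p a` since `δ` is below every gap;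
  -- pieces of actions with larger `p` stay above `v a` since `δ` is below every slope.
  rcases lt_or_ge (p b) (p a) with hba | hab
  · have hδa := (hgap a b hba).1
    rw [interpPiece, ramp_of_le hδ (by linarith)]
    nlinarith [Finset.le_sup' v (Finset.mem_univ a)]
  · rw [interpPiece, ramp_of_nonpos hδ (by linarith)]
    rcases hab.lt_or_eq with hlt | heq
    · linarith [(hgap b a hlt).2]
    · simp [heq, hv b a heq.le]

lemma monotoneInterp_le (hδ : 0 < δ) (a : B) (t : ℝ) :
    monotoneInterp p v δ t ≤ Finset.univ.sup' Finset.univ_nonempty v + δ * (t - p a) := by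
  refine (Finset.inf'_le _ (Finset.mem_univ a)).trans ?_
  have hlift := mul_le_mul_of_nonneg_left (ramp_le_one (s := t - p a) hδ)
    (sub_nonneg.2 (Finset.le_sup' v (Finset.mem_univ a)))
  simp only [interpPiece]
  linarith

lemma le_monotoneInterp (hδ : 0 < δ) (hp : ∀ b, p b ≤ 1) {V t : ℝ}
    (hV : V ≤ Finset.univ.sup' Finset.univ_nonempty v) (hVt : ∀ b, V ≤ v b ∨ p b + δ ≤ t) :
    V + δ * (t - 1) ≤ monotoneInterp p v δ t := by
  refine Finset.le_inf' _ _ fun b _ => ?_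
  have hslope := mul_le_mul_of_nonneg_left (sub_le_sub_left (hp b) t) hδ.le
  rcases hVt b with hb | hb
  · have hlift := mul_nonneg (sub_nonneg.2 (Finset.le_sup' v (Finset.mem_univ b)))
      (ramp_nonneg (s := t - p b) hδ)
    simp only [interpPiece]
    linarith
  · rw [interpPiece, ramp_of_le hδ (by linarith)]
    linarith

end Interpolation

noncomputable def barrier (q t : ℝ) : ℝ := max (q - t) 0 / t

section Barrier

variable {q t : ℝ}

lemma barrier_of_le (h : q ≤ t) : barrier q t = 0 := by
  rw [barrier, max_eq_right (sub_nonpos.2 h), zero_div]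

lemma barrier_nonneg (ht : 0 ≤ t) : 0 ≤ barrier q t :=
  div_nonneg (le_max_right _ _) ht

lemma barrier_le_one_div (hq : q ≤ 1) (ht : 0 < t) : barrier q t ≤ 1 / t :=
  div_le_div_of_nonneg_right (max_le (by linarith) zero_le_one) ht.le

lemma div_le_barrier (ht : 0 < t) (htq : t ≤ q / 2) : q / 2 / t ≤ barrier q t :=
  div_le_div_of_nonneg_right ((by linarith : q / 2 ≤ q - t).trans (le_max_left _ _)) ht.le

lemma antitoneOn_barrier : AntitoneOn (barrier q) (Ioi 0) := fun x hx _ _ hxy =>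
  div_le_div₀ (le_max_right _ _) (max_le_max_right _ (by linarith)) hx hxy

lemma continuousOn_barrier : ContinuousOn (barrier q) (Ioi 0) :=
  (by fun_prop : Continuous fun t => max (q - t) 0).continuousOn.div continuousOn_id
    fun _ ht => ht.ne'

end Barrier

lemma intervalIntegrable_of_continuousOn_Ioi {F : ℝ → ℝ} (hF : ContinuousOn F (Ioi 0)) {x y : ℝ}
    (hx : 0 < x) (hy : 0 < y) : IntervalIntegrable F MeasureTheory.volume x y :=
  (hF.mono fun _ ht => (lt_min hx hy).trans_le ht.1).intervalIntegrable

lemma hasDerivAt_integral_to_one {F : ℝ → ℝ} (hF : ContinuousOn F (Ioi 0)) {x : ℝ} (hx : 0 < x) :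
    HasDerivAt (fun y => ∫ t in y..1, F t) (-F x) x :=
  intervalIntegral.integral_hasDerivAt_left (intervalIntegrable_of_continuousOn_Ioi hF hx one_pos)
    (hF.stronglyMeasurableAtFilter isOpen_Ioi x hx) (hF.continuousAt (isOpen_Ioi.mem_nhds hx))

lemma tendsto_integral_atTop_of_div_le {F : ℝ → ℝ} (hF : ContinuousOn F (Ioi 0))
    (hF0 : ∀ t ∈ Ioc (0:ℝ) 1, 0 ≤ F t) {a c : ℝ} (ha : a ∈ Ioc (0:ℝ) 1) (hc : 0 < c)
    (hle : ∀ t ∈ Ioc 0 a, c / t ≤ F t) :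
    Tendsto (fun x => ∫ t in x..1, F t) (𝓝[>] 0) atTop := by
  have hlog : Tendsto (fun x => c * (Real.log a - Real.log x)) (𝓝[>] 0) atTop :=
    (tendsto_atTop_add_const_left _ _ (tendsto_neg_atBot_atTop.comp
      Real.tendsto_log_nhdsGT_zero)).const_mul_atTop hc
  refine tendsto_atTop_mono' _ ?_ hlog
  filter_upwards [Ioo_mem_nhdsGT ha.1] with x hx
  have hsplit := intervalIntegral.integral_add_adjacent_intervals
    (intervalIntegrable_of_continuousOn_Ioi hF hx.1 ha.1)
    (intervalIntegrable_of_continuousOn_Ioi hF ha.1 one_pos)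
  have hnear : c * (Real.log a - Real.log x) ≤ ∫ t in x..a, F t := by
    rw [← Real.log_div ha.1.ne' hx.1.ne', ← integral_inv_of_pos hx.1 ha.1,
      ← intervalIntegral.integral_const_mul]
    refine intervalIntegral.integral_mono_on hx.2.le ?_
      (intervalIntegrable_of_continuousOn_Ioi hF hx.1 ha.1)
      fun t ht => (div_eq_mul_inv c t).symm ▸ hle t ⟨hx.1.trans_le ht.1, ht.2⟩
    exact (continuousOn_const.mul (continuousOn_inv₀.mono fun t ht =>
      ((lt_min hx.1 ha.1).trans_le ht.1).ne')).intervalIntegrable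
  have hfar : 0 ≤ ∫ t in a..1, F t :=
    intervalIntegral.integral_nonneg ha.2 fun t ht => hF0 t ⟨ha.1.trans_le ht.1, ht.2⟩
  linarith

namespace ControlCost

lemma nonneg (c : ControlCost) {x : ℝ} (hx : x ∈ Ioc (0:ℝ) 1) : 0 ≤ c.f x := by
  rcases hx.2.eq_or_lt with rfl | hlt
  · rw [c.atOne]
  · exact c.atOne ▸ (c.anti hx ⟨one_pos, le_rfl⟩ hlt).le

noncomputable def ofMarginal (F : ℝ → ℝ) (hcont : ContinuousOn F (Ioi 0))
    (hpos : ∀ t ∈ Ioc (0:ℝ) 1, 0 < F t) (hanti : StrictAntiOn F (Ioc 0 1))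
    (hblow : Tendsto (fun x => ∫ t in x..1, F t) (𝓝[>] 0) atTop) : ControlCost where
  f x := ∫ t in x..1, F t
  f' x := -F x
  hasDeriv x hx := (hasDerivAt_integral_to_one hcont hx.1).hasDerivWithinAt
  contDeriv := (hcont.mono Ioc_subset_Ioi_self).neg
  anti := by
    refine strictAntiOn_of_deriv_neg (convex_Ioc 0 1)
      (fun x hx => (hasDerivAt_integral_to_one hcont hx.1).continuousAt.continuousWithinAt)
      fun x hx => ?_
    rw [interior_Ioc] at hx
    rw [(hasDerivAt_integral_to_one hcont hx.1).deriv, neg_lt_zero]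
    exact hpos x (Ioo_subset_Ioc_self hx)
  convex := by
    refine StrictMonoOn.strictConvexOn_of_deriv (convex_Ioc 0 1)
      (fun x hx => (hasDerivAt_integral_to_one hcont hx.1).continuousAt.continuousWithinAt)
      ?_
    rw [interior_Ioc]
    intro x hx y hy hxy
    rw [(hasDerivAt_integral_to_one hcont hx.1).deriv,
      (hasDerivAt_integral_to_one hcont hy.1).deriv, neg_lt_neg_iff]
    exact hanti (Ioo_subset_Ioc_self hx) (Ioo_subset_Ioc_self hy) hxy
  atOne := intervalIntegral.integral_same
  blowup := hblow

lemma ofMarginal_f_le {F : ℝ → ℝ} {hcont : ContinuousOn F (Ioi 0)}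
    {hpos : ∀ t ∈ Ioc (0:ℝ) 1, 0 < F t} {hanti : StrictAntiOn F (Ioc 0 1)}
    {hblow : Tendsto (fun x => ∫ t in x..1, F t) (𝓝[>] 0) atTop} {x : ℝ} (hx : x ∈ Ioc (0:ℝ) 1) :
    (ofMarginal F hcont hpos hanti hblow).f x ≤ F x :=
  calc ∫ t in x..1, F t ≤ ∫ _ in x..1, F x :=
        intervalIntegral.integral_mono_on hx.2
          (intervalIntegrable_of_continuousOn_Ioi hcont hx.1 one_pos)
          intervalIntegrable_const fun t ht =>
            hanti.antitoneOn hx ⟨hx.1.trans_le ht.1, ht.2⟩ ht.1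
    _ = (1 - x) * F x := by rw [intervalIntegral.integral_const, smul_eq_mul]
    _ ≤ F x := by nlinarith [hpos x hx, hx.1]

end ControlCost

section Marginal

variable {B : Type*} [Fintype B] [Nonempty B] {p v : B → ℝ} {δ e : ℝ}

lemma inf'_mem_Ioc (hp : ∀ a, p a ∈ Ioc (0:ℝ) 1) :
    Finset.univ.inf' Finset.univ_nonempty p ∈ Ioc (0:ℝ) 1 :=
  ⟨(Finset.lt_inf'_iff _).2 fun a _ => (hp a).1,
    (Finset.inf'_le _ (Finset.mem_univ (Classical.arbitrary B))).trans (hp _).2⟩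

variable (p v δ e) in
/-- The barrier term vanishes at every `p a`, so it does not affect the first-order conditions,
but it makes the integral diverge at `0`. -/
noncomputable def marginalCost (t : ℝ) : ℝ :=
  monotoneInterp p v δ 1 + e - monotoneInterp p v δ t +
    e * barrier (Finset.univ.inf' Finset.univ_nonempty p) t

lemma continuousOn_marginalCost : ContinuousOn (marginalCost p v δ e) (Ioi 0) :=
  (continuousOn_const.sub continuous_monotoneInterp.continuousOn).add
    (continuousOn_const.mul continuousOn_barrier)

lemma marginalCost_pos (hδ : 0 < δ) (he : 0 < e) {t : ℝ} (ht : t ∈ Ioc (0:ℝ) 1) :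
    0 < marginalCost p v δ e t := by
  have hmono := (strictMono_monotoneInterp (p := p) (v := v) hδ).monotone ht.2
  have hbar := mul_nonneg he.le
    (barrier_nonneg (q := Finset.univ.inf' Finset.univ_nonempty p) ht.1.le)
  unfold marginalCost
  linarith

lemma strictAntiOn_marginalCost (hδ : 0 < δ) (he : 0 ≤ e) :
    StrictAntiOn (marginalCost p v δ e) (Ioc 0 1) := by
  intro x hx y hy hxy
  have hmono := strictMono_monotoneInterp (p := p) (v := v) hδ hxy
  have hbar := mul_le_mul_of_nonneg_left
    (antitoneOn_barrier (q := Finset.univ.inf' Finset.univ_nonempty p) hx.1 hy.1 hxy.le) he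
  unfold marginalCost
  linarith

lemma tendsto_integral_marginalCost (hδ : 0 < δ) (he : 0 < e) (hp : ∀ a, p a ∈ Ioc (0:ℝ) 1) :
    Tendsto (fun x => ∫ t in x..1, marginalCost p v δ e t) (𝓝[>] 0) atTop := by
  obtain ⟨hq0, hq1⟩ := inf'_mem_Ioc hp
  refine tendsto_integral_atTop_of_div_le continuousOn_marginalCost
    (fun t ht => (marginalCost_pos hδ he ht).le) ⟨half_pos hq0, by linarith⟩
    (mul_pos he (half_pos hq0)) fun t ht => ?_
  have hmono := (strictMono_monotoneInterp (p := p) (v := v) hδ).monotone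
    (ht.2.trans (by linarith) : t ≤ 1)
  have hbar := mul_le_mul_of_nonneg_left (div_le_barrier ht.1 ht.2) he.le
  rw [mul_div_assoc]
  unfold marginalCost
  linarith

lemma marginalCost_apply (hδ : 0 < δ) (hv : ∀ a b, p b ≤ p a → v b ≤ v a)
    (hgap : ∀ a b, p b < p a → δ ≤ p a - p b ∧ δ * (p a - p b) ≤ v a - v b) (a : B) :
    marginalCost p v δ e (p a) = monotoneInterp p v δ 1 + e - v a := by
  rw [marginalCost, monotoneInterp_apply hδ hv hgap,
    barrier_of_le (Finset.inf'_le _ (Finset.mem_univ a)), mul_zero, add_zero]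

lemma marginalCost_le (hδ : 0 < δ) (hδe : δ ≤ e) (hp : ∀ a, p a ∈ Ioc (0:ℝ) 1) {x : ℝ}
    (hx : x ∈ Ioc (0:ℝ) 1) (S : Finset B) (hS : S.Nonempty) (hSx : ∀ b ∉ S, p b + e ≤ x) :
    marginalCost p v δ e x ≤
      Finset.univ.sup' Finset.univ_nonempty v - S.inf' hS v + 3 * e + e / x := by
  obtain ⟨b, hb⟩ := hS
  have hup := monotoneInterp_le (p := p) (v := v) hδ b 1
  have hlow := le_monotoneInterp (v := v) hδ (fun b => (hp b).2) (t := x)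
    ((S.inf'_le v hb).trans (Finset.le_sup' v (Finset.mem_univ b))) fun c => by
      by_cases hc : c ∈ S
      · exact .inl (S.inf'_le v hc)
      · exact .inr (by linarith [hSx c hc])
  have hbar := mul_le_mul_of_nonneg_left (barrier_le_one_div (inf'_mem_Ioc hp).2 hx.1)
    (hδ.le.trans hδe)
  rw [mul_one_div] at hbar
  have hup' : δ * (1 - p b) ≤ e := by nlinarith [(hp b).1]
  have hlow' : -e ≤ δ * (x - 1) := by nlinarith [hx.1]
  unfold marginalCost
  linarith

end Marginal

lemma exists_controlCost_of_payoffMonotone {B : Type*} [Fintype B] [Nonempty B] {p v : B → ℝ}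
    (hp : ∀ a, p a ∈ Ioc (0:ℝ) 1) (hv : ∀ a b, p b ≤ p a ↔ v b ≤ v a) {e : ℝ} (he : 0 < e) :
    ∃ c : ControlCost, (∀ a b, v a - v b = c.f' (p a) - c.f' (p b)) ∧
      ∀ x ∈ Ioc (0:ℝ) 1, ∀ (S : Finset B) (hS : S.Nonempty), (∀ b ∉ S, p b + e ≤ x) →
        c.f x ≤ Finset.univ.sup' Finset.univ_nonempty v - S.inf' hS v + 3 * e + e / x := by
  have hv_lt : ∀ a b, p b < p a → v b < v a := fun a b h =>
    lt_of_not_ge fun h' => h.not_ge ((hv b a).2 h')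
  obtain ⟨δ, ⟨hgap, hδe⟩, hδ⟩ := ((eventually_nhdsWithin_of_eventually_nhds
    ((eventually_forall_gap p v hv_lt).and (eventually_le_nhds he))).and
    (self_mem_nhdsWithin (s := Ioi (0:ℝ)))).exists
  refine ⟨.ofMarginal (marginalCost p v δ e) continuousOn_marginalCost
    (fun t ht => marginalCost_pos hδ he ht) (strictAntiOn_marginalCost hδ he.le)
    (tendsto_integral_marginalCost hδ he hp), fun a b => ?_,
    fun x hx S hS hSx =>
      (ControlCost.ofMarginal_f_le hx).trans (marginalCost_le hδ hδe hp hx S hS hSx)⟩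
  change v a - v b = -marginalCost p v δ e (p a) - -marginalCost p v δ e (p b)
  rw [marginalCost_apply hδ (fun a b => (hv a b).1) hgap,
    marginalCost_apply hδ (fun a b => (hv a b).1) hgap]
  ring

section Strategies

variable {N : Type} {A : N → Type} [∀ i, Fintype (A i)] {σ : ∀ i, A i → ℝ}
  {s : ℕ → ∀ i, A i → ℝ}

variable (σ) in
noncomputable def strategySupport (i : N) : Finset (A i) :=
  Finset.univ.filter fun a => 0 < σ i a

lemma IsStrategy.le_one (hσ : IsStrategy σ) (i : N) (a : A i) : σ i a ≤ 1 :=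
  (Finset.single_le_sum (fun b _ => hσ.1 i b) (Finset.mem_univ a)).trans_eq (hσ.2 i)

lemma IsStrategy.strategySupport_nonempty (hσ : IsStrategy σ) (i : N) :
    (strategySupport σ i).Nonempty := by
  obtain ⟨a, -, ha⟩ := Finset.exists_ne_zero_of_sum_ne_zero ((hσ.2 i).trans_ne one_ne_zero)
  exact ⟨a, Finset.mem_filter.2 ⟨Finset.mem_univ a, (hσ.1 i a).lt_of_ne' ha⟩⟩

lemma ConvergesTo.eventually_forall_notMem_strategySupport (hσ : IsStrategy σ)
    (hconv : ConvergesTo s σ) (i : N) {x : ℝ} (hx : 0 < x) :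
    ∀ᶠ n : ℕ in atTop, ∀ b ∉ strategySupport σ i, s n i b + 1 / ((n : ℝ) + 1) ≤ x := by
  refine eventually_all.2 fun b => ?_
  by_cases hb : b ∈ strategySupport σ i
  · exact Eventually.of_forall fun _ h => absurd hb h
  have hσb : σ i b = 0 :=
    (hσ.1 i b).antisymm' (not_lt.1 fun h => hb (Finset.mem_filter.2 ⟨Finset.mem_univ b, h⟩))
  have hlim := (hσb ▸ hconv i b).add tendsto_one_div_add_atTop_nhds_zero_nat
  rw [add_zero] at hlim
  filter_upwards [hlim.eventually_le_const hx] with n hn _ using hn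

end Strategies

section Nash

variable {N : Type} [Fintype N] [DecidableEq N] {A : N → Type}
  [∀ i, Fintype (A i)] [∀ i, DecidableEq (A i)] {u : ∀ i : N, (∀ j, A j) → ℝ}
  {σ : ∀ i, A i → ℝ} {s : ℕ → ∀ i, A i → ℝ}

variable (u σ) in
lemma expUtil_eq_sum_mul_devUtil (i : N) : expUtil u σ i = ∑ b, σ i b * devUtil u σ i b := by
  have hprod : ∀ (b : A i) (a : ∀ j, A j),
      (∏ j, Function.update σ i (fun c => if c = b then (1:ℝ) else 0) j (a j))
        = (if a i = b then (1:ℝ) else 0) * ∏ j ∈ Finset.univ.erase i, σ j (a j) := by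
    intro b a
    rw [← Finset.mul_prod_erase Finset.univ _ (Finset.mem_univ i)]
    congr 1
    · simp
    · refine Finset.prod_congr rfl fun j hj => ?_
      rw [Function.update_of_ne (Finset.mem_erase.1 hj).1]
  calc expUtil u σ i
      = ∑ a : ∀ j, A j, u i a * (σ i (a i) * ∏ j ∈ Finset.univ.erase i, σ j (a j)) := by
        refine Finset.sum_congr rfl fun a _ => ?_
        rw [← Finset.mul_prod_erase Finset.univ _ (Finset.mem_univ i)]
    _ = ∑ b, σ i b * devUtil u σ i b := by
        simp only [devUtil, expUtil, hprod, Finset.mul_sum]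
        rw [Finset.sum_comm]
        refine Finset.sum_congr rfl fun a _ => ?_
        simp only [mul_ite, ite_mul, one_mul, mul_zero, zero_mul, Finset.sum_ite_eq,
          Finset.mem_univ, if_true]
        ring

lemma IsNash.devUtil_le (hσ : IsNash u σ) (i : N) (a : A i) : devUtil u σ i a ≤ expUtil u σ i :=
  hσ.2 i _ (fun b => by positivity) (by simp)

lemma IsNash.devUtil_eq_of_pos (hσ : IsNash u σ) {i : N} {a : A i} (ha : 0 < σ i a) :
    devUtil u σ i a = expUtil u σ i := by
  refine (hσ.devUtil_le i a).antisymm (not_lt.1 fun hlt => ?_)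
  have hsum : ∑ b, σ i b * devUtil u σ i b < ∑ b, σ i b * expUtil u σ i :=
    Finset.sum_lt_sum (fun b _ => mul_le_mul_of_nonneg_left (hσ.devUtil_le i b) (hσ.1.1 i b))
      ⟨a, Finset.mem_univ a, mul_lt_mul_of_pos_left hlt ha⟩
  rw [← Finset.sum_mul, hσ.1.2 i, one_mul, ← expUtil_eq_sum_mul_devUtil] at hsum
  exact hsum.false

lemma ConvergesTo.tendsto_devUtil (hconv : ConvergesTo s σ) (i : N) (a : A i) :
    Tendsto (fun n => devUtil u (s n) i a) atTop (𝓝 (devUtil u σ i a)) := by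
  refine tendsto_finsetSum _ fun a' _ => (tendsto_finsetProd _ fun j _ => ?_).const_mul _
  rcases eq_or_ne j i with rfl | hj
  · simpa only [Function.update_self] using tendsto_const_nhds
  · simpa only [Function.update_of_ne hj] using hconv j (a' j)

lemma IsNash.tendsto_sup'_sub_inf'_devUtil (hσ : IsNash u σ) (hconv : ConvergesTo s σ) (i : N)
    [Nonempty (A i)] :
    Tendsto (fun n => Finset.univ.sup' Finset.univ_nonempty (devUtil u (s n) i) -
      (strategySupport σ i).inf' (hσ.1.strategySupport_nonempty i) (devUtil u (s n) i))
      atTop (𝓝 0) := by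
  have hS := hσ.1.strategySupport_nonempty i
  have hsupp : ∀ a ∈ strategySupport σ i, devUtil u σ i a = expUtil u σ i :=
    fun a ha => hσ.devUtil_eq_of_pos (Finset.mem_filter.1 ha).2
  have hsup : Finset.univ.sup' Finset.univ_nonempty (devUtil u σ i) = expUtil u σ i := by
    obtain ⟨a, ha⟩ := hS
    exact (Finset.sup'_le _ _ fun b _ => hσ.devUtil_le i b).antisymm
      ((hsupp a ha).symm.trans_le (Finset.le_sup' _ (Finset.mem_univ a)))
  have hinf : (strategySupport σ i).inf' hS (devUtil u σ i) = expUtil u σ i := by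
    obtain ⟨a, ha⟩ := hS
    exact (((strategySupport σ i).inf'_le _ ha).trans_eq (hsupp a ha)).antisymm
      (Finset.le_inf' _ _ fun b hb => (hsupp b hb).ge)
  have hlim := (Tendsto.finset_sup'_nhds_apply Finset.univ_nonempty fun a _ =>
    hconv.tendsto_devUtil (u := u) i a).sub
    (Tendsto.finset_inf'_nhds_apply hS fun a _ => hconv.tendsto_devUtil (u := u) i a)
  rwa [hsup, hinf, sub_self] at hlim

end Nash

/-- along a subsequence, a convergent sequence of interior payoff
monotone profiles with Nash limit consists of equilibria of control cost games with
vanishing control cost functions (expressed via first-order conditions). -/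
theorem empirical_via_vanishing_control_costs {N : Type} [Fintype N] [DecidableEq N] {A : N → Type}
    [∀ i, Fintype (A i)] [∀ i, DecidableEq (A i)] [∀ i, Nonempty (A i)]
    (u : ∀ i : N, (∀ j, A j) → ℝ) (σ : ∀ i, A i → ℝ) (hσ : IsNash u σ)
    (s : ℕ → ∀ i, A i → ℝ)
    (hs : ∀ n, Interior (s n) ∧ PayoffMonotone u (s n))
    (hconv : ConvergesTo s σ) :
    ∃ (κ : ℕ → ℕ) (f : ℕ → N → ControlCost),
      StrictMono κ ∧
      (∀ i : N, ∀ x ∈ Set.Ioc (0:ℝ) 1,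
        Tendsto (fun n => (f n i).f x) atTop (𝓝 0)) ∧
      ∀ (n : ℕ) (i : N) (al ak : A i),
        devUtil u (s (κ n)) i al - devUtil u (s (κ n)) i ak
          = (f n i).f' (s (κ n) i al) - (f n i).f' (s (κ n) i ak) := by
  choose c hfoc hbound using fun n i => exists_controlCost_of_payoffMonotone
    (fun a => ⟨(hs n).1 i a, (hs n).2.1.le_one i a⟩) ((hs n).2.2 i)
    (Nat.one_div_pos_of_nat (n := n))
  refine ⟨id, c, strictMono_id, fun i x hx => ?_, hfoc⟩
  have hlim := ((hσ.tendsto_sup'_sub_inf'_devUtil hconv i).add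
    (tendsto_one_div_add_atTop_nhds_zero_nat.const_mul 3)).add
    (tendsto_one_div_add_atTop_nhds_zero_nat.div_const x)
  rw [mul_zero, zero_div, add_zero, add_zero] at hlim
  refine tendsto_of_tendsto_of_tendsto_of_le_of_le' tendsto_const_nhds hlim
    (.of_forall fun n => (c n i).nonneg hx) ?_
  filter_upwards [hconv.eventually_forall_notMem_strategySupport hσ.1 i hx.1] with n hn
  exact hbound n i x hx _ _ hn
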